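/- arXiv:2005.06154 — 7 statements merged into one kernel-verified Lean document; each statement's English description precedes it below -/
import Mathlib

section
/- (Combinatorial core of Theorem 2, 'Preserve partitioned data security', full uniformity form.) Suppose n = k^2. Then for every a b : Fin n, n times the number of admissible permutations σ : Equiv.Perm (Fin n) satisfying σ a = b equals the total number of admissible permutations. In other words, conditioned on the adversarial view of one QB query (the admissibility constraint), the value σ a is uniformly distributed over Fin n, so the adversary's posterior probability that encrypted value a is associated with cleartext value b equals the prior probability 1/n. -/
/-!
Left multiplication by a permutation preserving `B` and right multiplication by one preserving
`A` both preserve admissibility. Using swaps, the number `N(a, b)` of admissible `σ` with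
`σ a = b` therefore depends only on whether `b ∈ B` (value `N_in` or `N_out`), and the number
`c(a)` of admissible `σ` with `σ a ∈ B` only on whether `a ∈ A`; moreover `c(a) = k N_in`. Double counting the pairs
`(x, σ)` with `σ x ∈ B`, where an admissible `σ` sends exactly one point of `A` and `k - 1`
points of `Aᶜ` into `B`, gives `k c(a) = M` for `a ∈ A` and `(n - k) c(a) = (k - 1) M` for
`a ∉ A`, `M` being the number of admissible permutations. When `n = k²` both say
`M = n N_in`, and comparing with `M = k N_in + (n - k) N_out` yields `N_out = N_in`.
-/

open Finset Equiv

section Admissible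

variable {α : Type*} [DecidableEq α]

lemma swap_apply_mem_iff_of_mem_iff {S : Finset α} {x y : α} (h : x ∈ S ↔ y ∈ S) (z : α) :
    swap x y z ∈ S ↔ z ∈ S := by
  rcases eq_or_ne z x with rfl | hx
  · simpa using h.symm
  rcases eq_or_ne z y with rfl | hy
  · simpa using h
  rw [swap_apply_of_ne_of_ne hx hy]

lemma card_image_inter_eq_card_filter (σ : Perm α) (A B : Finset α) :
    #(A.image σ ∩ B) = #{x ∈ A | σ x ∈ B} := by
  rw [← filter_mem_eq_inter, filter_image, card_image_of_injective _ σ.injective]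

lemma image_perm_of_apply_mem_iff {τ : Perm α} {A : Finset α} (hτ : ∀ x, τ x ∈ A ↔ x ∈ A) :
    A.image τ = A := by
  ext y
  refine ⟨fun hy => ?_, fun hy => mem_image.2 ⟨τ.symm y, ?_, τ.apply_symm_apply y⟩⟩
  · obtain ⟨x, hx, rfl⟩ := mem_image.1 hy
    exact (hτ x).2 hx
  · rwa [← hτ, τ.apply_symm_apply]

lemma card_filter_apply_eq_of_mul_left_mem_iff {s : Finset (Perm α)} {τ : Perm α}
    (hs : ∀ σ, τ * σ ∈ s ↔ σ ∈ s) (a b : α) :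
    #{σ ∈ s | σ a = b} = #{σ ∈ s | σ a = τ b} :=
  card_equiv (Equiv.mulLeft τ) fun σ => by simp [hs]

lemma card_filter_apply_mem_eq_of_mul_right_mem_iff {s : Finset (Perm α)} {τ : Perm α}
    (hs : ∀ σ, σ * τ ∈ s ↔ σ ∈ s) (a : α) (B : Finset α) :
    #{σ ∈ s | σ (τ a) ∈ B} = #{σ ∈ s | σ a ∈ B} :=
  card_equiv (Equiv.mulRight τ) fun σ => by simp [hs]

lemma sum_card_filter_apply_mem_comm (s : Finset (Perm α)) (S B : Finset α) :
    ∑ x ∈ S, #{σ ∈ s | σ x ∈ B} = ∑ σ ∈ s, #{x ∈ S | σ x ∈ B} := by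
  simp only [card_filter]
  exact sum_comm

variable [Fintype α]

lemma sum_card_filter_apply_mem (s : Finset (Perm α)) (B : Finset α) :
    ∑ x, #{σ ∈ s | σ x ∈ B} = #s * #B := by
  rw [sum_card_filter_apply_mem_comm, sum_const_nat fun σ _ => ?_]
  rw [← card_image_inter_eq_card_filter, image_univ_equiv, univ_inter]

def admissible (A B : Finset α) : Finset (Perm α) := {σ | #(A.image σ ∩ B) = 1}

variable {A B : Finset α}

lemma mul_left_mem_admissible_iff {τ : Perm α} (hτ : ∀ x, τ x ∈ B ↔ x ∈ B) (σ : Perm α) :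
    τ * σ ∈ admissible A B ↔ σ ∈ admissible A B := by
  simp only [admissible, mem_filter, mem_univ, true_and, card_image_inter_eq_card_filter,
    Perm.mul_apply, hτ]

lemma mul_right_mem_admissible_iff {τ : Perm α} (hτ : ∀ x, τ x ∈ A ↔ x ∈ A) (σ : Perm α) :
    σ * τ ∈ admissible A B ↔ σ ∈ admissible A B := by
  simp only [admissible, mem_filter, mem_univ, true_and, Perm.coe_mul, ← image_image,
    image_perm_of_apply_mem_iff hτ]

lemma card_filter_admissible_apply_eq_of_mem_iff (a : α) {b b' : α} (h : b ∈ B ↔ b' ∈ B) :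
    #{σ ∈ admissible A B | σ a = b} = #{σ ∈ admissible A B | σ a = b'} := by
  simpa using card_filter_apply_eq_of_mul_left_mem_iff
    (mul_left_mem_admissible_iff (swap_apply_mem_iff_of_mem_iff h)) a b

lemma card_filter_admissible_apply_mem_eq_of_mem_iff {a a' : α} (h : a ∈ A ↔ a' ∈ A) :
    #{σ ∈ admissible A B | σ a' ∈ B} = #{σ ∈ admissible A B | σ a ∈ B} := by
  simpa using card_filter_apply_mem_eq_of_mul_right_mem_iff
    (mul_right_mem_admissible_iff (swap_apply_mem_iff_of_mem_iff h)) a B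

lemma sum_card_filter_admissible_apply_mem :
    ∑ x ∈ A, #{σ ∈ admissible A B | σ x ∈ B} = #(admissible A B) := by
  rw [sum_card_filter_apply_mem_comm, sum_const_nat fun σ hσ => ?_, mul_one]
  rw [← card_image_inter_eq_card_filter]
  exact (mem_filter.1 hσ).2

lemma card_filter_admissible_apply_mem_eq_card_mul (a : α) {b : α} {T : Finset α}
    (hT : ∀ b' ∈ T, b' ∈ B ↔ b ∈ B) :
    #{σ ∈ admissible A B | σ a ∈ T} = #T * #{σ ∈ admissible A B | σ a = b} := by
  rw [card_eq_sum_card_fiberwise (s := {σ ∈ admissible A B | σ a ∈ T}) (t := T)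
    (f := fun σ => σ a) fun σ hσ => (mem_filter.1 hσ).2, sum_const_nat fun b' hb' => ?_]
  rw [filter_filter, ← card_filter_admissible_apply_eq_of_mem_iff a (hT b' hb')]
  congr 1
  exact filter_congr fun σ _ => and_iff_right_of_imp fun h => h ▸ hb'

lemma card_admissible_eq_add (a : α) {b₀ b₁ : α} (hb₀ : b₀ ∈ B) (hb₁ : b₁ ∉ B) :
    #(admissible A B) = #B * #{σ ∈ admissible A B | σ a = b₀} +
      #Bᶜ * #{σ ∈ admissible A B | σ a = b₁} := by
  rw [← card_filter_admissible_apply_mem_eq_card_mul a fun b' hb' => iff_of_true hb' hb₀,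
    ← card_filter_admissible_apply_mem_eq_card_mul a
      fun b' hb' => iff_of_false (mem_compl.1 hb') hb₁]
  simp only [mem_compl]
  exact (card_filter_add_card_filter_not _).symm

lemma card_mul_card_filter_admissible_apply_mem_of_mem {a : α} (ha : a ∈ A) :
    #A * #{σ ∈ admissible A B | σ a ∈ B} = #(admissible A B) := by
  rw [← sum_card_filter_admissible_apply_mem, sum_const_nat fun x hx =>
    card_filter_admissible_apply_mem_eq_of_mem_iff (iff_of_true ha hx)]

lemma card_admissible_add_card_compl_mul_card_filter_apply_mem {a : α} (ha : a ∉ A) :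
    #(admissible A B) + #Aᶜ * #{σ ∈ admissible A B | σ a ∈ B} = #(admissible A B) * #B := by
  rw [← sum_card_filter_apply_mem, ← sum_add_sum_compl A, sum_card_filter_admissible_apply_mem,
    sum_const_nat fun x hx =>
      card_filter_admissible_apply_mem_eq_of_mem_iff (iff_of_false ha (mem_compl.1 hx))]

lemma card_admissible_eq_card_mul {k : ℕ} (hA : #A = k) (hB : #B = k)
    (hα : Fintype.card α = k ^ 2) (a : α) {b : α} (hb : b ∈ B) :
    #(admissible A B) = Fintype.card α * #{σ ∈ admissible A B | σ a = b} := by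
  set N := #{σ ∈ admissible A B | σ a = b}
  have hc : #{σ ∈ admissible A B | σ a ∈ B} = k * N := by
    rw [← hB]
    exact card_filter_admissible_apply_mem_eq_card_mul a fun b' hb' => iff_of_true hb' hb
  rw [hα]
  by_cases ha : a ∈ A
  · rw [← card_mul_card_filter_admissible_apply_mem_of_mem ha, hc, hA]
    ring
  · have hcount := card_admissible_add_card_compl_mul_card_filter_apply_mem (B := B) ha
    rw [hc, card_compl, hA, hB, hα] at hcount
    have hk : k < k ^ 2 := by simpa [hA, hα] using card_lt_univ_of_notMem ha
    have hk2 : 2 ≤ k := by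
      by_contra! h
      interval_cases k <;> simp at hk
    obtain ⟨m, rfl⟩ : ∃ m, k = m + 2 := ⟨k - 2, by omega⟩
    have hsub : (m + 2) ^ 2 - (m + 2) = (m + 2) * (m + 1) := Nat.sub_eq_of_eq_add (by ring)
    rw [hsub] at hcount
    apply Nat.eq_of_mul_eq_mul_right m.succ_pos
    linarith

lemma card_mul_card_filter_admissible_apply {k : ℕ} (hA : #A = k) (hB : #B = k)
    (hα : Fintype.card α = k ^ 2) (a b : α) :
    Fintype.card α * #{σ ∈ admissible A B | σ a = b} = #(admissible A B) := by
  obtain ⟨b₀, hb₀⟩ : B.Nonempty := by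
    have hk : 0 < k ^ 2 := hα ▸ Fintype.card_pos_iff.2 ⟨a⟩
    rw [← card_pos, hB]
    exact Nat.pos_of_ne_zero (by rintro rfl; simp at hk)
  have hM := card_admissible_eq_card_mul hA hB hα a hb₀
  by_cases hb : b ∈ B
  · rw [card_filter_admissible_apply_eq_of_mem_iff a (iff_of_true hb hb₀), hM]
  · have hsplit := card_admissible_eq_add (A := A) a hb₀ hb
    rw [← card_add_card_compl B] at hM
    have hN : #{σ ∈ admissible A B | σ a = b} = #{σ ∈ admissible A B | σ a = b₀} :=
      Nat.eq_of_mul_eq_mul_left (card_pos.2 ⟨b, mem_compl.2 hb⟩) (by linarith)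
    rw [hN, hM, card_add_card_compl]

end Admissible

theorem panda_uniform_posterior (n k : ℕ) (A B : Finset (Fin n))
    (hA : A.card = k) (hB : B.card = k) (hn : n = k ^ 2) (a b : Fin n) :
    n * (Finset.univ.filter (fun σ : Equiv.Perm (Fin n) =>
        (A.image (σ : Fin n → Fin n) ∩ B).card = 1 ∧ σ a = b)).card =
    (Finset.univ.filter (fun σ : Equiv.Perm (Fin n) =>
        (A.image (σ : Fin n → Fin n) ∩ B).card = 1)).card := by
  have := card_mul_card_filter_admissible_apply hA hB (by rw [Fintype.card_fin, hn]) a b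
  rwa [Fintype.card_fin, admissible, filter_filter] at this
end

section
/- (Theorem 2 for a queried pair; the paper's ratio ((n−1)!−x) / (n·((n−1)!−x)) = 1/n.) Suppose n = k^2, a ∈ A and b ∈ B. Then n times the number of admissible permutations σ with σ a = b equals the total number of admissible permutations; i.e., the probability that the queried encrypted value a corresponds to the queried cleartext value b, conditioned on admissibility, is exactly 1/n. -/
/-!
Multiplying by transpositions on both sides, `σ ↦ (q b) σ (p a)` with `p, a ∈ A` and
`q, b ∈ B`, preserves `#(σ A ∩ B)` and is an involution exchanging the permutations with
`σ p = q` and those with `σ a = b`. So among the admissible permutations the `k²` events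
`σ p = q`, `(p, q) ∈ A × B`, are equally frequent, and each admissible `σ` lies in exactly one
of them: double counting gives `#admissible = k² · #{admissible, σ a = b}`.
-/

open Finset Equiv

namespace Finset

theorem card_filter_apply_eq_eq_card_image_inter {α β : Type*} [DecidableEq β]
    (A : Finset α) (B : Finset β) (σ : α ≃ β) :
    #{pq ∈ A ×ˢ B | σ pq.1 = pq.2} = #(A.image σ ∩ B) := by
  refine card_nbij' Prod.snd (fun q => (σ.symm q, q)) ?_ ?_ ?_ ?_
  · rintro ⟨p, q⟩ h
    simp only [coe_filter, mem_product, Set.mem_ofPred_eq] at h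
    obtain ⟨⟨hp, hq⟩, rfl⟩ := h
    simp [hp, hq]
  · intro q h
    simpa using h
  · rintro ⟨p, q⟩ h
    simp only [coe_filter, mem_product, Set.mem_ofPred_eq] at h
    obtain ⟨-, rfl⟩ := h
    simp
  · intro q _
    rfl

variable {α : Type*} [DecidableEq α]

open scoped Pointwise in
theorem image_swap_of_mem {s : Finset α} {x y : α} (hx : x ∈ s) (hy : y ∈ s) :
    s.image (swap x y) = s := by
  have h := MulAction.mem_stabilizer_iff.mp (Perm.swap_mem_stabilizer (s := (s : Set α)) hx hy)
  exact_mod_cast h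

theorem card_image_mul_mul_inter {A B : Finset α} {ρ τ : Perm α}
    (hρ : B.image ρ = B) (hτ : A.image τ = A) (σ : Perm α) :
    #(A.image ⇑(ρ * σ * τ) ∩ B) = #(A.image σ ∩ B) := by
  have himage : A.image ⇑(ρ * σ * τ) = (A.image σ).image ρ := by
    rw [Perm.coe_mul, Perm.coe_mul, ← image_image, ← image_image, hτ]
  rw [himage, ← hρ, ← image_inter _ _ ρ.injective, card_image_of_injective _ ρ.injective, hρ]

theorem card_filter_card_image_inter_and_apply_eq_of_mem [Fintype α] {A B : Finset α}
    {p a q b : α} (hp : p ∈ A) (ha : a ∈ A) (hq : q ∈ B) (hb : b ∈ B) (m : ℕ) :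
    #{σ : Perm α | #(A.image σ ∩ B) = m ∧ σ p = q} =
      #{σ : Perm α | #(A.image σ ∩ B) = m ∧ σ a = b} := by
  have hoverlap := card_image_mul_mul_inter (image_swap_of_mem hq hb) (image_swap_of_mem hp ha)
  set f : Perm α → Perm α := fun σ => swap q b * σ * swap p a
  have hinvolutive : Function.Involutive f := fun σ => by simp [f, mul_assoc]
  refine card_nbij' f f ?_ ?_ (fun σ _ => hinvolutive σ) (fun σ _ => hinvolutive σ)
  all_goals
    intro σ hσ
    simp only [coe_filter, mem_univ, true_and, Set.mem_ofPred_eq] at hσ ⊢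
    refine ⟨(hoverlap σ).trans hσ.1, ?_⟩
    simp [f, hσ.2]

end Finset

theorem panda_queried_pair_posterior (n k : ℕ) (A B : Finset (Fin n))
    (hA : A.card = k) (hB : B.card = k) (hn : n = k ^ 2)
    (a b : Fin n) (ha : a ∈ A) (hb : b ∈ B) :
    n * (Finset.univ.filter (fun σ : Equiv.Perm (Fin n) =>
        (A.image (σ : Fin n → Fin n) ∩ B).card = 1 ∧ σ a = b)).card =
    (Finset.univ.filter (fun σ : Equiv.Perm (Fin n) =>
        (A.image (σ : Fin n → Fin n) ∩ B).card = 1)).card := by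
  set admissible := (univ.filter fun σ : Perm (Fin n) => #(A.image σ ∩ B) = 1)
  have hdouble := sum_card_bipartiteAbove_eq_sum_card_bipartiteBelow
    (s := admissible) (t := A ×ˢ B) (r := fun σ pq => σ pq.1 = pq.2)
  simp only [bipartiteAbove, bipartiteBelow] at hdouble
  have hpairs : ∀ σ ∈ admissible, #{pq ∈ A ×ˢ B | σ pq.1 = pq.2} = 1 := by
    intro σ hσ
    exact (card_filter_apply_eq_eq_card_image_inter A B σ).trans (mem_filter.mp hσ).2
  have hfibres : ∀ pq ∈ A ×ˢ B, #{σ ∈ admissible | σ pq.1 = pq.2} =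
      #{σ : Perm (Fin n) | #(A.image σ ∩ B) = 1 ∧ σ a = b} := by
    rintro ⟨p, q⟩ hpq
    obtain ⟨hp, hq⟩ := mem_product.mp hpq
    rw [filter_filter]
    exact card_filter_card_image_inter_and_apply_eq_of_mem hp ha hq hb 1
  rw [sum_congr rfl hpairs, sum_congr rfl hfibres, sum_const, sum_const, card_product, hA, hB]
    at hdouble
  simpa [hn, sq] using hdouble.symm
end

section
/- (Exact count of admissible allocations; the paper's count n·((n−1)!−x) of all possible allocations consistent with one query.) The total number of admissible permutations σ : Equiv.Perm (Fin n) equals k^2 * Nat.descFactorial (n − k) (k − 1) * Nat.factorial (n − k). (The formula holds for all n and k, both sides being 0 when no admissible permutation exists.) -/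
/-! Restricting a permutation to `A` maps the permutations of `Fin n` onto the injections
`A → Fin n`, with every fibre of size `(n - k)!`, and `σ` is admissible exactly when its
restriction sends a single point of `A` into `B`. Such an injection is given by that point
(`k` choices), its image in `B` (`k` choices) and an injection of the other `k - 1` points of `A`
into the `n - k` points outside `B`. -/

open Finset Function Nat

theorem Finset.card_image_inter_of_injective {α β : Type*} [DecidableEq β] {f : α → β}
    (hf : Injective f) (s : Finset α) (t : Finset β) :
    #(s.image f ∩ t) = #{x : s | f x ∈ t} := by
  rw [← filter_mem_eq_inter, filter_image, card_image_of_injective _ hf, univ_eq_attach,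
    filter_attach (fun x => f x ∈ t), card_map, card_attach]

namespace Equiv.Perm

variable {α : Type*} [Fintype α] [DecidableEq α]

theorem card_filter_forall_mem_apply_eq_self (S : Finset α) :
    #{σ : Perm α | ∀ x ∈ S, σ x = x} = (Fintype.card α - #S)! := by
  rw [← Fintype.card_subtype, ← Fintype.card_coe S, ← Fintype.card_subtype_compl,
    ← Fintype.card_perm]
  refine Fintype.card_congr ((Equiv.subtypeEquivRight fun σ => ?_).trans
    (Perm.subtypeEquivSubtypePerm (· ∉ S)).symm)
  simp only [not_not]

theorem card_filter_restrict_eq (S : Finset α) {g : S → α} (hg : Injective g) :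
    #{σ : Perm α | S.restrict σ = g} = (Fintype.card α - #S)! := by
  classical
  set σ₀ : Perm α := (Equiv.ofInjective g hg).extendSubtype
  have hσ₀ : ∀ x : S, σ₀ x = g x := fun x =>
    (Equiv.ofInjective g hg).extendSubtype_apply_of_mem x x.2
  rw [← card_filter_forall_mem_apply_eq_self S]
  refine card_nbij' (σ₀⁻¹ * ·) (σ₀ * ·) ?_ ?_ (fun σ _ => by simp) (fun τ _ => by simp)
  · intro σ hσ
    simp only [coe_filter, Set.mem_ofPred_eq, mem_univ, true_and] at hσ ⊢
    intro x hx
    simpa using σ₀.symm_apply_eq.mpr ((congrFun hσ ⟨x, hx⟩).trans (hσ₀ ⟨x, hx⟩).symm)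
  · intro τ hτ
    simp only [coe_filter, Set.mem_ofPred_eq, mem_univ, true_and] at hτ ⊢
    ext x
    simp [Finset.restrict, hτ x x.2, hσ₀]

theorem card_filter_restrict (S : Finset α) (P : (S → α) → Prop) [DecidablePred P] :
    #{σ : Perm α | P (S.restrict σ)} =
      #{g : S → α | Injective g ∧ P g} * (Fintype.card α - #S)! := by
  rw [card_eq_sum_card_fiberwise (f := fun σ : Perm α => S.restrict σ)
    (t := {g : S → α | Injective g ∧ P g}), ← smul_eq_mul, ← sum_const]
  · refine sum_congr rfl fun g hg => ?_
    simp only [mem_filter, mem_univ, true_and] at hg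
    rw [filter_filter, ← card_filter_restrict_eq S hg.1]
    congr 1
    exact filter_congr fun σ _ => ⟨And.right, fun h => ⟨h ▸ hg.2, h⟩⟩
  · intro σ hσ
    simp only [coe_filter, Set.mem_ofPred_eq, mem_univ, true_and] at hσ ⊢
    exact ⟨fun x y h => Subtype.ext (σ.injective h), hσ⟩

end Equiv.Perm

section InjectiveCount

variable {ι α : Type*} [Fintype ι] [DecidableEq ι] [Fintype α] [DecidableEq α]

theorem card_filter_injective_and_forall_apply (p : α → Prop) [DecidablePred p] :
    #{g : ι → α | Injective g ∧ ∀ i, p (g i)} =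
      (Fintype.card {a // p a}).descFactorial (Fintype.card ι) := by
  rw [← Fintype.card_subtype, ← Fintype.card_embedding_eq]
  exact Fintype.card_congr
    { toFun g := ⟨fun i => ⟨g.1 i, g.2.2 i⟩, fun i j h => g.2.1 (congrArg Subtype.val h)⟩
      invFun f := ⟨fun i => f i, Subtype.val_injective.comp f.injective, fun i => (f i).2⟩
      left_inv _ := rfl
      right_inv _ := rfl }

theorem card_filter_injective_and_forall_apply_mem_iff_eq (B : Finset α) (i₀ : ι) :
    #{g : ι → α | Injective g ∧ ∀ i, g i ∈ B ↔ i = i₀} =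
      #B * (Fintype.card α - #B).descFactorial (Fintype.card ι - 1) := by
  have hsplit : ∀ g : ι → α, (Injective g ∧ ∀ i, g i ∈ B ↔ i = i₀) ↔
      g i₀ ∈ B ∧
        Injective (fun i : {i // i ≠ i₀} => g i) ∧ ∀ i : {i // i ≠ i₀}, g i ∉ B := by
    intro g
    constructor
    · rintro ⟨hinj, hmem⟩
      exact ⟨(hmem i₀).2 rfl, fun i j h => Subtype.ext (hinj h),
        fun i => by simpa [hmem] using i.2⟩
    · rintro ⟨hi₀, hinj, hout⟩
      have hmem : ∀ i, g i ∈ B ↔ i = i₀ := fun i => by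
        by_cases hi : i = i₀
        · simp [hi, hi₀]
        · simpa [hi] using hout ⟨i, hi⟩
      refine ⟨fun i j h => ?_, hmem⟩
      have hij : i = i₀ ↔ j = i₀ := by rw [← hmem, ← hmem, h]
      by_cases hi : i = i₀
      · exact hi.trans (hij.1 hi).symm
      · exact congrArg Subtype.val (@hinj ⟨i, hi⟩ ⟨j, mt hij.2 hi⟩ h)
  rw [← Fintype.card_subtype,
    Fintype.card_congr (((Equiv.funSplitAt i₀ α).subtypeEquiv hsplit).trans
      (Equiv.subtypeProdEquivProd (p := (· ∈ B))
        (q := fun h => Injective h ∧ ∀ i, h i ∉ B))),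
    Fintype.card_prod, Fintype.card_coe, Fintype.card_subtype,
    card_filter_injective_and_forall_apply (· ∉ B), Fintype.card_subtype_compl, Fintype.card_coe,
    Fintype.card_subtype_compl, Fintype.card_subtype_eq]

theorem card_filter_injective_and_card_filter_mem_eq_one (B : Finset α) :
    #{g : ι → α | Injective g ∧ #{i | g i ∈ B} = 1} =
      Fintype.card ι * #B * (Fintype.card α - #B).descFactorial (Fintype.card ι - 1) := by
  have hsplit : ({g : ι → α | Injective g ∧ #{i | g i ∈ B} = 1} : Finset _) =
      univ.biUnion fun i₀ => {g | Injective g ∧ ∀ i, g i ∈ B ↔ i = i₀} := by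
    ext g
    simp only [mem_filter, mem_univ, true_and, mem_biUnion, card_eq_one, Finset.ext_iff,
      mem_singleton, exists_and_left]
  rw [hsplit, card_biUnion, sum_congr rfl fun i₀ _ =>
    card_filter_injective_and_forall_apply_mem_iff_eq B i₀, sum_const, Finset.card_univ,
    smul_eq_mul, mul_assoc]
  intro i₀ _ i₁ _ hne
  simp only [Function.onFun, disjoint_left, mem_filter, mem_univ, true_and]
  rintro g ⟨-, h₀⟩ ⟨-, h₁⟩
  exact hne ((h₀ i₁).1 ((h₁ i₁).2 rfl)).symm

end InjectiveCount

theorem panda_admissible_count (n k : ℕ) (A B : Finset (Fin n))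
    (hA : A.card = k) (hB : B.card = k) :
    (Finset.univ.filter (fun σ : Equiv.Perm (Fin n) =>
        (A.image (σ : Fin n → Fin n) ∩ B).card = 1)).card =
    k ^ 2 * Nat.descFactorial (n - k) (k - 1) * Nat.factorial (n - k) := by
  calc _ = #{σ : Equiv.Perm (Fin n) | #{x : A | A.restrict σ x ∈ B} = 1} := by
        simp only [card_image_inter_of_injective (Equiv.injective _)]; rfl
    _ = _ := by
      rw [Equiv.Perm.card_filter_restrict A (fun g => #{x | g x ∈ B} = 1),
        card_filter_injective_and_card_filter_mem_eq_one, Fintype.card_coe, Fintype.card_fin,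
        hA, hB, sq]
end

section
/- (Exact count with a fixed matched queried pair; the paper's count (n−1)!−x of allocations assuming a queried cleartext value is the plaintext of a queried encrypted value.) If a ∈ A and b ∈ B, then the number of admissible permutations σ with σ a = b equals Nat.descFactorial (n − k) (k − 1) * Nat.factorial (n − k). -/
/-!
Once `σ a = b` is imposed, admissibility says exactly that `σ` maps the other `k - 1` elements
of `A` into the `n - k` elements outside `B`. Prescribing the images of those `k - 1` points one
at a time gives `(n - k).descFactorial (k - 1)` choices, and every such partial assignment,
together with `a ↦ b`, extends to a permutation in `(n - k)!` ways, since the permutations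
extending a fixed injection on `k` points form a coset of the pointwise stabiliser of those
points, which is `Perm` of their complement.
-/

open Finset Equiv
open scoped Nat

section PermCount

variable {α : Type*} [Fintype α] [DecidableEq α]

theorem card_perm_fixing_pointwise (s : Finset α) :
    #{σ : Perm α | ∀ x ∈ s, σ x = x} = (Fintype.card α - #s)! := by
  have hfix : #{σ : Perm α | ∀ x ∈ s, σ x = x}
      = Fintype.card {σ : Perm α // ∀ x, ¬x ∉ s → σ x = x} := by
    simp only [not_not, Fintype.card_subtype]
  rw [hfix, ← Fintype.card_congr (Perm.subtypeEquivSubtypePerm (· ∉ s)), Fintype.card_perm,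
    Fintype.card_subtype_compl, Fintype.card_coe]

theorem card_perm_extending {s : Finset α} {f : α → α} (hf : Set.InjOn f s) :
    #{σ : Perm α | ∀ x ∈ s, σ x = f x} = (Fintype.card α - #s)! := by
  obtain ⟨e, he⟩ := exists_equiv_extend_of_card_eq (t := univ) card_univ.symm
    (subset_univ _) hf
  set σ₀ : Perm α := e.trans (subtypeUnivEquiv mem_univ)
  have hσ₀ : ∀ x ∈ s, σ₀ x = f x := he
  rw [← card_perm_fixing_pointwise s]
  refine card_equiv (Equiv.mulLeft σ₀⁻¹) fun σ => ?_
  simp only [mem_filter, mem_univ, true_and, coe_mulLeft, Perm.mul_apply, Perm.inv_eq_iff_eq]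
  exact forall₂_congr fun x hx => by rw [hσ₀ x hx]

def permsExtendingInto (s : Finset α) (f : α → α) (S T : Finset α) : Finset (Perm α) :=
  {σ | (∀ x ∈ s, σ x = f x) ∧ ∀ x ∈ S, σ x ∈ T}

theorem filter_apply_eq_permsExtendingInto_insert {s S T : Finset α} {f : α → α} {c d : α}
    (hcs : c ∉ s) (hcS : c ∉ S) (hd : d ∈ T) :
    {σ ∈ permsExtendingInto s f (insert c S) T | σ c = d}
      = permsExtendingInto (insert c s) (Function.update f c d) S (T.erase d) := by
  have hupd : Set.EqOn (Function.update f c d) f s := fun x hx =>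
    Function.update_of_ne (ne_of_mem_of_not_mem hx hcs) d f
  ext σ
  simp only [permsExtendingInto, mem_filter, mem_univ, true_and, forall_mem_insert, mem_erase,
    Function.update_self]
  constructor
  · rintro ⟨⟨hs, -, hS⟩, rfl⟩
    exact ⟨⟨rfl, fun x hx => (hs x hx).trans (hupd hx).symm⟩,
      fun x hx => ⟨fun h => hcS (σ.injective h ▸ hx), hS x hx⟩⟩
  · rintro ⟨⟨rfl, hs⟩, hS⟩
    exact ⟨⟨fun x hx => (hs x hx).trans (hupd hx), hd, fun x hx => (hS x hx).2⟩, rfl⟩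

theorem card_permsExtendingInto {s S T : Finset α} {f : α → α} (hf : Set.InjOn f s)
    (hsS : Disjoint s S) (hfT : ∀ x ∈ s, f x ∉ T) :
    #(permsExtendingInto s f S T) = (#T).descFactorial #S * (Fintype.card α - #s - #S)! := by
  induction S using Finset.induction_on generalizing s f T with
  | empty => simpa [permsExtendingInto] using card_perm_extending hf
  | insert c S hcS ih =>
    obtain ⟨hcs, hsS⟩ := disjoint_insert_right.1 hsS
    -- Split by the image `d ∈ T` of `c`: prescribing it moves `c` from `S` to `s`.
    have fiber (d : α) (hd : d ∈ T) : #{σ ∈ permsExtendingInto s f (insert c S) T | σ c = d}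
        = (#T - 1).descFactorial #S * (Fintype.card α - (#s + 1) - #S)! := by
      have hupd : Set.EqOn (Function.update f c d) f s := fun x hx =>
        Function.update_of_ne (ne_of_mem_of_not_mem hx hcs) d f
      have hf' : Set.InjOn (Function.update f c d) ↑(insert c s) := by
        rw [coe_insert, Set.injOn_insert (by simpa using hcs), hupd.image_eq,
          Function.update_self]
        exact ⟨hf.congr hupd.symm, fun ⟨x, hx, hxd⟩ => hfT x hx (hxd ▸ hd)⟩
      have hfT' : ∀ x ∈ insert c s, Function.update f c d x ∉ T.erase d := by
        simp only [forall_mem_insert, Function.update_self, notMem_erase, not_false_eq_true,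
          true_and]
        exact fun x hx h => hfT x hx (hupd hx ▸ mem_of_mem_erase h)
      rw [filter_apply_eq_permsExtendingInto_insert hcs hcS hd,
        ih hf' (disjoint_insert_left.2 ⟨hcS, hsS⟩) hfT', card_erase_of_mem hd,
        card_insert_of_notMem hcs]
    have hmaps : Set.MapsTo (fun σ : Perm α => σ c) (permsExtendingInto s f (insert c S) T) T :=
      fun σ hσ => (mem_filter.1 hσ).2.2 c (mem_insert_self c S)
    have hdesc : #T * (#T - 1).descFactorial #S = (#T).descFactorial (#S + 1) := by
      cases #T with
      | zero => simp
      | succ t => rw [Nat.succ_descFactorial_succ, Nat.add_sub_cancel]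
    rw [card_eq_sum_card_fiberwise hmaps, sum_congr rfl fiber, sum_const, smul_eq_mul,
      ← mul_assoc, hdesc, card_insert_of_notMem hcS]
    congr 2
    omega

end PermCount

theorem card_image_inter_eq_one_iff {α β : Type*} [DecidableEq α] [DecidableEq β] {f : α → β}
    (hf : Function.Injective f) {A : Finset α} {B : Finset β} {a : α} (ha : a ∈ A)
    (hb : f a ∈ B) : #(A.image f ∩ B) = 1 ↔ ∀ x ∈ A.erase a, f x ∉ B := by
  have hmem : f a ∈ A.image f ∩ B := mem_inter.2 ⟨mem_image_of_mem f ha, hb⟩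
  constructor
  · intro h x hx hxB
    obtain ⟨c, hc⟩ := card_eq_one.1 h
    have hxc : f x ∈ A.image f ∩ B := mem_inter.2 ⟨mem_image_of_mem f (mem_of_mem_erase hx), hxB⟩
    rw [hc, mem_singleton] at hmem hxc
    exact ne_of_mem_erase hx (hf (hxc.trans hmem.symm))
  · intro h
    refine card_eq_one.2 ⟨f a, eq_singleton_iff_unique_mem.2 ⟨hmem, ?_⟩⟩
    rintro _ hy
    obtain ⟨⟨x, hx, rfl⟩, hxB⟩ := (mem_inter.1 hy).imp_left mem_image.1
    by_contra hne
    exact h x (mem_erase.2 ⟨fun e => hne (congrArg f e), hx⟩) hxB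

theorem panda_matched_pair_count (n k : ℕ) (A B : Finset (Fin n))
    (hA : A.card = k) (hB : B.card = k)
    (a b : Fin n) (ha : a ∈ A) (hb : b ∈ B) :
    (Finset.univ.filter (fun σ : Equiv.Perm (Fin n) =>
        (A.image (σ : Fin n → Fin n) ∩ B).card = 1 ∧ σ a = b)).card =
    Nat.descFactorial (n - k) (k - 1) * Nat.factorial (n - k) := by
  have hadm : ({σ : Perm (Fin n) | #(A.image σ ∩ B) = 1 ∧ σ a = b} : Finset (Perm (Fin n)))
      = permsExtendingInto {a} (fun _ => b) (A.erase a) Bᶜ := by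
    ext σ
    simp only [permsExtendingInto, mem_filter, mem_univ, true_and, mem_singleton, forall_eq,
      mem_compl]
    constructor
    · rintro ⟨h, hab⟩
      exact ⟨hab, (card_image_inter_eq_one_iff σ.injective ha (hab ▸ hb)).1 h⟩
    · rintro ⟨hab, h⟩
      exact ⟨(card_image_inter_eq_one_iff σ.injective ha (hab ▸ hb)).2 h, hab⟩
  have hk : 1 ≤ k := hA ▸ card_pos.2 ⟨a, ha⟩
  rw [hadm, card_permsExtendingInto (by simp) (disjoint_singleton_left.2 (notMem_erase a A))
    (by simpa using hb), card_compl, card_singleton, card_erase_of_mem ha, Fintype.card_fin, hA,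
    hB]
  congr 2
  omega
end

section
/- (Exact count when a queried encrypted value maps to an unqueried cleartext value.) If a ∈ A and b ∉ B, then the number of admissible permutations σ with σ a = b equals k * (k − 1) * Nat.descFactorial (n − k − 1) (k − 2) * Nat.factorial (n − k). (Here subtraction is truncated natural subtraction; for k = 1 both sides are 0.) -/
/-! The point `a` lands on `b ∉ B`, so an admissible `σ` with `σ a = b` sends exactly one
`a' ∈ A \ {a}` to some `b' ∈ B` and the other `k - 2` points of `A` outside `B ∪ {b}`. The pairs
`(a', b')` index a partition of these permutations into `(k - 1) k` classes. In each class the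
points of `A \ {a, a'}` are placed injectively into the `n - k - 1` values outside `B ∪ {b}`,
one at a time, and the `n - k` points outside `A` then form an arbitrary bijection onto the
values still free. -/

open Finset

lemma card_image_inter_eq_one_iff_s5 {α β : Type*} [DecidableEq β] {g : α → β}
    (hg : Function.Injective g) {s : Finset α} {t : Finset β} :
    #(s.image g ∩ t) = 1 ↔ ∃ x ∈ s, g x ∈ t ∧ ∀ y ∈ s, g y ∈ t → y = x := by
  rw [← filter_mem_eq_inter, filter_image, card_image_of_injective _ hg, card_eq_one]
  simp only [eq_singleton_iff_unique_mem, mem_filter, and_imp, and_assoc]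

section

variable {α : Type*} [Fintype α] [DecidableEq α]

lemma card_perm_eqOn_id (u : Finset α) :
    #{σ : Equiv.Perm α | ∀ x ∈ u, σ x = x} = (Fintype.card α - #u).factorial := by
  rw [← Fintype.card_subtype, ← card_compl, ← Fintype.card_coe, ← Fintype.card_perm]
  refine (Fintype.card_congr <| (Equiv.Perm.subtypeEquivSubtypePerm (· ∈ uᶜ)).trans <|
    Equiv.subtypeEquivRight fun σ => ?_).symm
  simp only [mem_compl, not_not]

lemma card_perm_eqOn {u : Finset α} {f : α → α} (hf : Set.InjOn f u) :
    #{σ : Equiv.Perm α | ∀ x ∈ u, σ x = f x} = (Fintype.card α - #u).factorial := by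
  obtain ⟨τ, hτ⟩ := Finset.exists_equiv_extend_of_card_eq (t := univ) card_univ.symm
    (subset_univ _) hf
  let π : Equiv.Perm α := τ.trans (Equiv.subtypeUnivEquiv mem_univ)
  have hπ : ∀ x ∈ u, π x = f x := hτ
  -- left multiplication by `π⁻¹` carries the permutations extending `f` onto those fixing `u`
  rw [← card_perm_eqOn_id u, ← Fintype.card_subtype, ← Fintype.card_subtype]
  refine Fintype.card_congr <| (Equiv.mulLeft π⁻¹).subtypeEquiv fun σ => ?_
  refine forall₂_congr fun x hx => ?_
  rw [Equiv.coe_mulLeft, Equiv.Perm.mul_apply, Equiv.Perm.inv_eq_iff_eq, hπ x hx]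

lemma card_perm_eqOn_mapsTo {u s : Finset α} {f : α → α} {t : Finset α} (hus : Disjoint u s)
    (hf : Set.InjOn f u) (hft : ∀ x ∈ u, f x ∉ t) :
    #{σ : Equiv.Perm α | (∀ x ∈ u, σ x = f x) ∧ ∀ x ∈ s, σ x ∈ t} =
      (#t).descFactorial #s * (Fintype.card α - #u - #s).factorial := by
  induction s using Finset.induction_on generalizing u f t with
  | empty => simpa using card_perm_eqOn hf
  | insert x s hxs ih =>
    have hxu : x ∉ u := disjoint_right.1 hus (mem_insert_self x s)
    have hus' : Disjoint u s := hus.mono_right (subset_insert x s)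
    have hupd : ∀ y, ∀ z ∈ u, Function.update f x y z = f z := fun y z hz =>
      Function.update_of_ne (ne_of_mem_of_not_mem hz hxu) y f
    have hfiber : ∀ y ∈ t, ∀ σ : Equiv.Perm α,
        ((∀ z ∈ u, σ z = f z) ∧ (∀ z ∈ insert x s, σ z ∈ t)) ∧ σ x = y ↔
        (∀ z ∈ insert x u, σ z = Function.update f x y z) ∧ ∀ z ∈ s, σ z ∈ t.erase y := by
      intro y hy σ
      simp only [forall_mem_insert, Function.update_self, mem_erase]
      constructor
      · rintro ⟨⟨hu, -, hs⟩, rfl⟩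
        exact ⟨⟨rfl, fun z hz => by rw [hupd _ z hz, hu z hz]⟩,
          fun z hz => ⟨σ.injective.ne (ne_of_mem_of_not_mem hz hxs), hs z hz⟩⟩
      · rintro ⟨⟨rfl, hu⟩, hs⟩
        exact ⟨⟨fun z hz => by rw [hu z hz, hupd _ z hz], hy, fun z hz => (hs z hz).2⟩, rfl⟩
    have hinj : ∀ y ∈ t, Set.InjOn (Function.update f x y) (insert x u : Finset α) := by
      intro y hy
      rw [coe_insert, Set.injOn_insert (by simpa using hxu), Function.update_self]
      refine ⟨hf.congr fun z hz => (hupd y z hz).symm, ?_⟩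
      rintro ⟨z, hz, hzy⟩
      rw [hupd y z hz] at hzy
      exact hft z hz (hzy ▸ hy)
    have hvalues : ∀ y, ∀ z ∈ insert x u, Function.update f x y z ∉ t.erase y := by
      intro y
      simp only [forall_mem_insert, Function.update_self, notMem_erase, not_false_eq_true,
        true_and]
      exact fun z hz => by rw [hupd y z hz]; exact fun h => hft z hz (mem_of_mem_erase h)
    -- split according to `y = σ x ∈ t`; then `x` joins `u` with value `y`, and `y` leaves `t`
    rw [card_eq_sum_card_fiberwise (f := fun σ => σ x) (t := t)
      (fun σ hσ => (mem_filter.1 hσ).2.2 x (mem_insert_self x s))]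
    rw [sum_congr rfl fun y hy => by
      rw [filter_filter, filter_congr fun σ _ => hfiber y hy σ,
        ih (disjoint_insert_left.2 ⟨hxs, hus'⟩) (hinj y hy) (hvalues y), card_erase_of_mem hy],
      sum_const, smul_eq_mul, card_insert_of_notMem hxs, card_insert_of_notMem hxu,
      show Fintype.card α - (#u + 1) - #s = Fintype.card α - #u - (#s + 1) by omega, ← mul_assoc]
    congr 1
    cases #t with
    | zero => rw [zero_mul, Nat.zero_descFactorial_succ]
    | succ m => rw [Nat.succ_descFactorial_succ, Nat.add_sub_cancel]

variable {A B : Finset α} {a b : α}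

lemma filter_card_image_inter_eq_one_eq_biUnion (hb : b ∉ B) :
    (univ.filter fun σ : Equiv.Perm α => #(A.image σ ∩ B) = 1 ∧ σ a = b) =
      ((A.erase a) ×ˢ B).biUnion fun p => univ.filter fun σ : Equiv.Perm α =>
        σ a = b ∧ σ p.1 = p.2 ∧ ∀ z ∈ (A.erase a).erase p.1, σ z ∉ insert b B := by
  ext σ
  simp only [mem_filter, mem_univ, true_and, mem_biUnion, mem_product, mem_erase,
    card_image_inter_eq_one_iff_s5 σ.injective, Prod.exists, mem_insert, not_or]
  constructor
  · rintro ⟨⟨a', ha'A, ha'B, huniq⟩, hσa⟩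
    have ha' : a' ≠ a := by rintro rfl; exact hb (hσa ▸ ha'B)
    refine ⟨a', σ a', ⟨⟨ha', ha'A⟩, ha'B⟩, hσa, rfl, fun z ⟨hza', hza, hzA⟩ => ⟨?_, ?_⟩⟩
    · rw [← hσa]; exact σ.injective.ne hza
    · exact fun hzB => hza' (huniq z hzA hzB)
  · rintro ⟨a', b', ⟨⟨ha', ha'A⟩, hb'⟩, hσa, hσa', hrest⟩
    refine ⟨⟨a', ha'A, hσa' ▸ hb', fun y hyA hyB => ?_⟩, hσa⟩
    by_contra hya'
    have hya : y ≠ a := by rintro rfl; exact hb (hσa ▸ hyB)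
    exact (hrest y ⟨hya', hya, hyA⟩).2 hyB

lemma pairwiseDisjoint_filter_apply_eq :
    ((A.erase a ×ˢ B : Finset (α × α)) : Set (α × α)).PairwiseDisjoint fun p =>
      univ.filter fun σ : Equiv.Perm α =>
        σ a = b ∧ σ p.1 = p.2 ∧ ∀ z ∈ (A.erase a).erase p.1, σ z ∉ insert b B := by
  rintro ⟨a₁, b₁⟩ h₁ ⟨a₂, b₂⟩ h₂ hne
  rw [coe_product, Set.mem_prod, mem_coe, mem_coe] at h₁ h₂
  rw [Function.onFun, disjoint_filter]
  rintro σ - ⟨-, hσ₁, -⟩ ⟨-, hσ₂, hrest₂⟩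
  obtain rfl : a₁ = a₂ := by
    by_contra h
    exact hrest₂ a₁ (mem_erase.2 ⟨h, h₁.1⟩) (mem_insert_of_mem (hσ₁ ▸ h₁.2))
  exact hne (Prod.ext rfl (hσ₁.symm.trans hσ₂))

lemma card_filter_apply_eq_apply_eq_mapsTo {a' b' : α} (ha : a ∈ A) (hb : b ∉ B)
    (ha' : a' ∈ A.erase a) (hb' : b' ∈ B) :
    #{σ : Equiv.Perm α | σ a = b ∧ σ a' = b' ∧ ∀ z ∈ (A.erase a).erase a', σ z ∉ insert b B} =
      (Fintype.card α - #B - 1).descFactorial (#A - 2) * (Fintype.card α - #A).factorial := by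
  have haa' : a ≠ a' := (ne_of_mem_erase ha').symm
  have hbb' : b ≠ b' := (ne_of_mem_of_not_mem hb' hb).symm
  have hs : #((A.erase a).erase a') = #A - 2 := by
    rw [card_erase_of_mem ha', card_erase_of_mem ha, Nat.sub_sub]
  have hA : 2 ≤ #A := by
    have := card_pos.2 ⟨a', ha'⟩
    rw [card_erase_of_mem ha] at this
    omega
  have ht : #(insert b B)ᶜ = Fintype.card α - #B - 1 := by
    rw [card_compl, card_insert_of_notMem hb, Nat.sub_sub]
  rw [filter_congr (q := fun σ : Equiv.Perm α =>
      (∀ z ∈ ({a, a'} : Finset α), σ z = if z = a then b else b') ∧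
        ∀ z ∈ (A.erase a).erase a', σ z ∈ (insert b B)ᶜ) fun σ _ => by
      simp only [forall_mem_insert, mem_singleton, forall_eq, if_pos, if_neg haa'.symm,
        mem_compl, and_assoc],
    card_perm_eqOn_mapsTo, ht, hs, card_pair haa']
  · congr 2
    omega
  · simp
  · simp [haa'.symm, hbb']
  · simp [haa'.symm, hb']

end

theorem panda_unqueried_target_count (n k : ℕ) (A B : Finset (Fin n))
    (hA : A.card = k) (hB : B.card = k)
    (a b : Fin n) (ha : a ∈ A) (hb : b ∉ B) :
    (Finset.univ.filter (fun σ : Equiv.Perm (Fin n) =>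
        (A.image (σ : Fin n → Fin n) ∩ B).card = 1 ∧ σ a = b)).card =
    k * (k - 1) * Nat.descFactorial (n - k - 1) (k - 2) * Nat.factorial (n - k) := by
  rw [filter_card_image_inter_eq_one_eq_biUnion hb, card_biUnion pairwiseDisjoint_filter_apply_eq,
    sum_congr rfl fun p hp => card_filter_apply_eq_apply_eq_mapsTo ha hb
      (mem_product.1 hp).1 (mem_product.1 hp).2,
    sum_const, card_product, card_erase_of_mem ha, hA, hB, Fintype.card_fin, smul_eq_mul]
  ring
end

section
/- (The adversary cannot tell which queried encrypted value is the one shared with the non-sensitive bin: each is the matched one with probability exactly 1/k.) If a ∈ A, then k times the number of admissible permutations σ with σ a ∈ B equals the total number of admissible permutations. -/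
/-!
Right multiplication by the transposition `swap x a` of two elements of `A` is a bijection of
the permutations that leaves `A.image σ` unchanged and exchanges the events `σ x ∈ B` and
`σ a ∈ B`. Hence the number `N` of admissible `σ` with `σ x ∈ B` does not depend on `x ∈ A`.
Counting pairs `(x, σ)` with `x ∈ A`, `σ` admissible and `σ x ∈ B` gives `k * N` on one side and,
since each admissible `σ` sends exactly one element of `A` into `B`, the number of admissible `σ`
on the other.
-/

open Finset Equiv

theorem Finset.card_image_inter_eq_card_filter {α β : Type*} [DecidableEq β] {f : α → β}
    (hf : f.Injective) (s : Finset α) (t : Finset β) : #(s.image f ∩ t) = #{x ∈ s | f x ∈ t} := by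
  rw [← filter_mem_eq_inter, filter_image, card_image_of_injective _ hf]

variable {α : Type*} [DecidableEq α]

theorem Finset.image_swap_of_mem_s7 {s : Finset α} {x y : α} (hx : x ∈ s) (hy : y ∈ s) :
    s.image (swap x y) = s := by
  rw [← coe_toEmbedding, ← map_eq_image]
  refine map_perm fun z hz => ?_
  by_contra hzs
  exact hz (swap_apply_of_ne_of_ne (ne_of_mem_of_not_mem hx hzs).symm
    (ne_of_mem_of_not_mem hy hzs).symm)

theorem Finset.image_mul_swap_of_mem (σ : Perm α) {s : Finset α} {x y : α} (hx : x ∈ s)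
    (hy : y ∈ s) : s.image ⇑(σ * swap x y) = s.image σ := by
  rw [Perm.coe_mul, ← image_image, image_swap_of_mem_s7 hx hy]

variable [Fintype α]

theorem card_perm_filter_image_and_apply_mem_congr (P : Finset α → Prop) [DecidablePred P]
    {A : Finset α} (B : Finset α) {x y : α} (hx : x ∈ A) (hy : y ∈ A) :
    #{σ : Perm α | P (A.image σ) ∧ σ x ∈ B} = #{σ : Perm α | P (A.image σ) ∧ σ y ∈ B} :=
  card_equiv (Equiv.mulRight (swap x y)) fun σ => by
    simp only [mem_filter, mem_univ, true_and, coe_mulRight, image_mul_swap_of_mem σ hx hy,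
      Perm.mul_apply, swap_apply_right]

theorem sum_card_perm_filter_and_apply_mem (P : Perm α → Prop) [DecidablePred P]
    (A B : Finset α) :
    ∑ x ∈ A, #{σ : Perm α | P σ ∧ σ x ∈ B} = ∑ σ : Perm α with P σ, #(A.image σ ∩ B) := by
  simp_rw [← filter_filter, card_filter]
  rw [sum_comm]
  exact sum_congr rfl fun σ _ => by
    rw [card_image_inter_eq_card_filter σ.injective, card_filter]

theorem panda_which_encrypted_matched_general (n k : ℕ) (A B : Finset (Fin n))
    (hA : A.card = k) (a : Fin n) (ha : a ∈ A) :
    k * (Finset.univ.filter (fun σ : Equiv.Perm (Fin n) =>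
        (A.image (σ : Fin n → Fin n) ∩ B).card = 1 ∧ σ a ∈ B)).card =
    (Finset.univ.filter (fun σ : Equiv.Perm (Fin n) =>
        (A.image (σ : Fin n → Fin n) ∩ B).card = 1)).card := by
  calc k * #{σ : Perm (Fin n) | #(A.image σ ∩ B) = 1 ∧ σ a ∈ B}
      = ∑ x ∈ A, #{σ : Perm (Fin n) | #(A.image σ ∩ B) = 1 ∧ σ x ∈ B} := by
        rw [sum_congr rfl fun x hx =>
          card_perm_filter_image_and_apply_mem_congr (fun s => #(s ∩ B) = 1) B hx ha, sum_const, hA,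
          smul_eq_mul]
    _ = ∑ σ ∈ univ.filter fun σ : Perm (Fin n) => #(A.image σ ∩ B) = 1, #(A.image σ ∩ B) :=
        sum_card_perm_filter_and_apply_mem _ A B
    _ = _ := by
        rw [card_eq_sum_ones]
        exact sum_congr rfl fun σ hσ => (mem_filter.1 hσ).2

theorem panda_which_encrypted_matched (n k : ℕ) (A B : Finset (Fin n))
    (hA : A.card = k) (hB : B.card = k) (a : Fin n) (ha : a ∈ A) :
    k * (Finset.univ.filter (fun σ : Equiv.Perm (Fin n) =>
        (A.image (σ : Fin n → Fin n) ∩ B).card = 1 ∧ σ a ∈ B)).card =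
    (Finset.univ.filter (fun σ : Equiv.Perm (Fin n) =>
        (A.image (σ : Fin n → Fin n) ∩ B).card = 1)).card :=
  panda_which_encrypted_matched_general n k A B hA a ha
end

section
/- (The adversary cannot tell which queried cleartext value is the one shared with the sensitive bin: each is the matched one with probability exactly 1/k.) If b ∈ B, then k times the number of admissible permutations σ with b ∈ A.image σ equals the total number of admissible permutations. -/
/-!
An admissible `σ` matches exactly one `c ∈ B`, namely the unique element of `A.image σ ∩ B`.
Composing with the transposition `swap c b`, which preserves `B`, is a bijection between the
permutations matching `c` and those matching `b`, so each of the `k` elements of `B` is matched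
by the same number of permutations.
-/

open Finset Equiv

section

variable {α : Type*} [DecidableEq α]

lemma Equiv.swap_apply_mem_iff {B : Finset α} {b b' : α} (hb : b ∈ B) (hb' : b' ∈ B) (x : α) :
    swap b b' x ∈ B ↔ x ∈ B := by
  rcases eq_or_ne x b with rfl | hxb
  · simp [hb, hb']
  rcases eq_or_ne x b' with rfl | hxb'
  · simp [hb, hb']
  rw [swap_apply_of_ne_of_ne hxb hxb']

lemma Finset.image_perm_inter_of_forall_mem_iff (S B : Finset α) {τ : Perm α}
    (hτ : ∀ x, τ x ∈ B ↔ x ∈ B) : S.image τ ∩ B = (S ∩ B).image τ := by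
  ext x
  simp only [mem_inter, mem_image]
  constructor
  · rintro ⟨⟨y, hy, rfl⟩, hyB⟩
    exact ⟨y, ⟨hy, (hτ y).1 hyB⟩, rfl⟩
  · rintro ⟨y, ⟨hy, hyB⟩, rfl⟩
    exact ⟨⟨y, hy, rfl⟩, (hτ y).2 hyB⟩

lemma Finset.inter_eq_singleton_iff_card_eq_one_and_mem {S B : Finset α} {b : α} (hb : b ∈ B) :
    S ∩ B = {b} ↔ #(S ∩ B) = 1 ∧ b ∈ S := by
  constructor
  · intro h
    exact ⟨by rw [h, card_singleton], (mem_inter.1 (h ▸ mem_singleton_self b)).1⟩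
  · rintro ⟨hcard, hbS⟩
    obtain ⟨c, hc⟩ := card_eq_one.1 hcard
    have : b ∈ S ∩ B := mem_inter.2 ⟨hbS, hb⟩
    rw [hc, mem_singleton] at this
    rw [hc, this]

lemma Finset.card_filter_card_inter_eq_one {ι : Type*} [DecidableEq ι] (s : Finset ι)
    (f : ι → Finset α) (B : Finset α) :
    #{i ∈ s | #(f i ∩ B) = 1} = ∑ c ∈ B, #{i ∈ s | f i ∩ B = {c}} := by
  rw [← card_biUnion]
  · congr 1
    ext i
    simp only [mem_filter, mem_biUnion, card_eq_one]
    constructor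
    · rintro ⟨hi, c, hc⟩
      exact ⟨c, mem_of_mem_inter_right (hc ▸ mem_singleton_self c), hi, hc⟩
    · rintro ⟨c, -, hi, hc⟩
      exact ⟨hi, c, hc⟩
  · intro c _ c' _ hcc'
    simp only [Function.onFun, disjoint_left, mem_filter]
    rintro i ⟨-, hc⟩ ⟨-, hc'⟩
    exact hcc' (singleton_injective (hc.symm.trans hc'))

lemma Finset.card_filter_image_inter_eq_singleton_apply [Fintype α] (A B : Finset α)
    {τ : Perm α} (hτ : ∀ x, τ x ∈ B ↔ x ∈ B) (b : α) :
    #{σ : Perm α | A.image σ ∩ B = {b}} = #{σ : Perm α | A.image σ ∩ B = {τ b}} := by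
  refine card_equiv (Equiv.mulLeft τ) fun σ => ?_
  have himage : A.image (τ * σ) = (A.image σ).image τ := by
    rw [image_image]
    rfl
  simp only [mem_filter, mem_univ, true_and, coe_mulLeft, himage,
    image_perm_inter_of_forall_mem_iff _ _ hτ, ← image_singleton,
    (image_injective τ.injective).eq_iff]

end

theorem panda_which_cleartext_matched_general (n k : ℕ) (A B : Finset (Fin n))
    (hB : B.card = k) (b : Fin n) (hb : b ∈ B) :
    k * (Finset.univ.filter (fun σ : Equiv.Perm (Fin n) =>
        (A.image (σ : Fin n → Fin n) ∩ B).card = 1 ∧ b ∈ A.image (σ : Fin n → Fin n))).card =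
    (Finset.univ.filter (fun σ : Equiv.Perm (Fin n) =>
        (A.image (σ : Fin n → Fin n) ∩ B).card = 1)).card := by
  have hmatched (σ : Perm (Fin n)) :
      (#(A.image σ ∩ B) = 1 ∧ b ∈ A.image σ) ↔ A.image σ ∩ B = {b} :=
    (inter_eq_singleton_iff_card_eq_one_and_mem hb).symm
  have hequal (c : Fin n) (hc : c ∈ B) :
      #{σ : Perm (Fin n) | A.image σ ∩ B = {c}} = #{σ : Perm (Fin n) | A.image σ ∩ B = {b}} := by
    simpa using card_filter_image_inter_eq_singleton_apply A B (swap_apply_mem_iff hc hb) c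
  rw [filter_congr fun σ _ => hmatched σ, card_filter_card_inter_eq_one, sum_congr rfl hequal,
    sum_const, hB, smul_eq_mul]

theorem panda_which_cleartext_matched (n k : ℕ) (A B : Finset (Fin n))
    (hA : A.card = k) (hB : B.card = k) (b : Fin n) (hb : b ∈ B) :
    k * (Finset.univ.filter (fun σ : Equiv.Perm (Fin n) =>
        (A.image (σ : Fin n → Fin n) ∩ B).card = 1 ∧ b ∈ A.image (σ : Fin n → Fin n))).card =
    (Finset.univ.filter (fun σ : Equiv.Perm (Fin n) =>
        (A.image (σ : Fin n → Fin n) ∩ B).card = 1)).card :=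
  panda_which_cleartext_matched_general n k A B hB b hb
end
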